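/- arXiv:2002.11001 — 2 statements merged into one kernel-verified Lean document; each statement's English description precedes it below -/
import Mathlib

section
/- Let N ≥ 2, 0 < ρ < r, t > 0, and κ_N > 0. Define φ₀ on the annulus {ρ ≤ F^o(x) ≤ r} by φ₀(x) = t·log(r/F^o(x))/log(r/ρ). Then, assuming F(∇F^o(x)) = 1 for x ≠ 0 and the level-set surface integral identity ∫_{{F^o = s}} |∇F^o|^{−1} dσ = N κ_N s^{N−1}, one has ∫_{{ρ ≤ F^o ≤ r}} F^N(∇φ₀) dx = N κ_N t^N / (log(r/ρ))^{N−1}. -/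
open MeasureTheory Real

/-- anisotropic capacity of the Wulff annulus. With `F` 1-homogeneous,
`F(∇F^o) = 1`, and the co-area/level-set identity (encoded as the hypothesis `hcoarea`),
the function `φ₀(x) = t log(r/F^o(x))/log(r/ρ)` satisfies
`∫_{ρ ≤ F^o ≤ r} F^N(∇φ₀) dx = N κ_N t^N / (log(r/ρ))^{N−1}`. -/
theorem stmt_5 (N : ℕ) (hN : 2 ≤ N) (κ ρ r t : ℝ)
    (hκ : 0 < κ) (hρ : 0 < ρ) (hρr : ρ < r) (ht : 0 < t)
    (F Fo : EuclideanSpace ℝ (Fin N) → ℝ)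
    (hFhom : ∀ (c : ℝ) (x : EuclideanSpace ℝ (Fin N)), F (c • x) = |c| * F x)
    (hFo0 : Fo 0 = 0)
    (hFopos : ∀ x, x ≠ 0 → 0 < Fo x)
    (hFodiff : ∀ x, x ≠ 0 → DifferentiableAt ℝ Fo x)
    (hFgrad : ∀ x, x ≠ 0 → F (gradient Fo x) = 1)
    (hcoarea : ∀ g : ℝ → ℝ, Measurable g →
      ∫ x in {x : EuclideanSpace ℝ (Fin N) | ρ ≤ Fo x ∧ Fo x ≤ r}, g (Fo x)
        = ∫ s in ρ..r, g s * ((N : ℝ) * κ * s ^ (N - 1)))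
    (φ₀ : EuclideanSpace ℝ (Fin N) → ℝ)
    (hφ₀ : ∀ x, φ₀ x = t * Real.log (r / Fo x) / Real.log (r / ρ)) :
    ∫ x in {x : EuclideanSpace ℝ (Fin N) | ρ ≤ Fo x ∧ Fo x ≤ r}, (F (gradient φ₀ x)) ^ N
      = (N : ℝ) * κ * t ^ N / (Real.log (r / ρ)) ^ (N - 1) := by
  have hr : 0 < r := hρ.trans hρr
  set L : ℝ := Real.log (r / ρ) with hL
  have hLpos : 0 < L :=
    Real.log_pos (by rw [lt_div_iff₀ hρ]; linarith)
  have hLne : L ≠ 0 := ne_of_gt hLpos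
  clear_value L
  set a : ℝ := t / L with ha
  have hapos : 0 < a := div_pos ht hLpos
  clear_value a
  set S : Set (EuclideanSpace ℝ (Fin N)) := {x | ρ ≤ Fo x ∧ Fo x ≤ r} with hSdef
  -- measurability of Fo and of the annulus S
  have hFom : Measurable Fo := by
    apply measurable_of_continuousOn_compl_singleton (0 : EuclideanSpace ℝ (Fin N))
    intro x hx
    exact (hFodiff x hx).continuousAt.continuousWithinAt
  have hS : MeasurableSet S := by
    have : S = Fo ⁻¹' Set.Icc ρ r := rfl
    rw [this]; exact hFom measurableSet_Icc
  -- gradient computation on S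
  have hgrad : ∀ x ∈ S, F (gradient φ₀ x) = a / Fo x := by
    intro x hx
    obtain ⟨hx1, hx2⟩ := hx
    have hxne : x ≠ 0 := by
      intro h; rw [h, hFo0] at hx1; linarith
    have hFoxpos : 0 < Fo x := hFopos x hxne
    have hdiff := hFodiff x hxne
    -- eventually Fo y > 0
    have hev : ∀ᶠ y in nhds x, 0 < Fo y :=
      hdiff.continuousAt (Ioi_mem_nhds hFoxpos)
    have heq : φ₀ =ᶠ[nhds x] fun y => a * Real.log r - a * Real.log (Fo y) := by
      filter_upwards [hev] with y hy
      rw [hφ₀ y, Real.log_div (ne_of_gt hr) (ne_of_gt hy), ha]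
      ring
    have hlogFo : HasFDerivAt (fun y => Real.log (Fo y))
        ((Fo x)⁻¹ • (InnerProductSpace.toDual ℝ _ (gradient Fo x))) x := by
      have := (Real.hasDerivAt_log (ne_of_gt hFoxpos)).comp_hasFDerivAt x
        hdiff.hasGradientAt.hasFDerivAt
      have h' : HasFDerivAt (Real.log ∘ Fo) ((Fo x)⁻¹ • (InnerProductSpace.toDual ℝ _ (gradient Fo x))) x := by
        simpa [smul_smul] using this
      exact h'
    have hgr : HasGradientAt (fun y => a * Real.log r - a * Real.log (Fo y))
        ((-(a / Fo x)) • gradient Fo x) x := by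
      rw [hasGradientAt_iff_hasFDerivAt]
      have hf := (hasFDerivAt_const (a * Real.log r) x).sub (hlogFo.const_smul a)
      refine hf.congr_fderiv ?_
      rw [LinearIsometryEquiv.map_smul, zero_sub, smul_smul, div_eq_mul_inv, neg_smul]
    have : gradient φ₀ x = (-(a / Fo x)) • gradient Fo x := by
      rw [heq.gradient_eq]
      exact hgr.gradient
    rw [this, hFhom, hFgrad x hxne, mul_one, abs_neg,
      abs_of_pos (div_pos hapos hFoxpos)]
  -- rewrite the integrand
  have hg : Measurable (fun s : ℝ => (a / s) ^ N) :=
    (measurable_const.div measurable_id).pow_const N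
  have h1 : ∫ x in S, (F (gradient φ₀ x)) ^ N = ∫ x in S, (fun s => (a / s) ^ N) (Fo x) := by
    apply setIntegral_congr_fun hS
    intro x hx
    simp only [hgrad x hx]
  rw [h1, hcoarea _ hg]
  -- compute the interval integral
  have h2 : ∫ s in ρ..r, (a / s) ^ N * ((N : ℝ) * κ * s ^ (N - 1))
      = ∫ s in ρ..r, ((N : ℝ) * κ * a ^ N) * s⁻¹ := by
    apply intervalIntegral.integral_congr
    intro s hs
    have hspos : 0 < s := lt_of_lt_of_le hρ (by
      rcases hs with ⟨h1', h2'⟩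
      simpa [min_eq_left hρr.le] using h1')
    have hsN : s ^ N = s * s ^ (N - 1) := by
      conv_lhs => rw [show N = (N - 1) + 1 from (Nat.succ_pred_eq_of_pos (by omega)).symm]
      rw [pow_succ]
      ring
    dsimp only
    rw [div_pow]
    field_simp
    rw [hsN]
    ring
  rw [h2, intervalIntegral.integral_const_mul,
    integral_inv (by
      intro h
      rcases h with ⟨h1', _⟩
      simp only [min_eq_left hρr.le] at h1'
      linarith), ← hL]
  -- final algebra
  have hLN : L ^ N = L ^ (N - 1) * L := by
    conv_lhs => rw [show N = (N - 1) + 1 from (Nat.succ_pred_eq_of_pos (by omega)).symm]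
    rw [pow_succ]
  rw [ha, div_pow, hLN]
  have hLN1 : L ^ (N - 1) ≠ 0 := pow_ne_zero _ hLne
  field_simp
end

section
/- Let 0 < ρ < δ, N ≥ 2, κ_N > 0, and let i, s be real numbers. The function h(x) = (s(log F^o(x−x₀) − log ρ) + i(log δ − log F^o(x−x₀)))/(log δ − log ρ), defined on the Wulff annulus {ρ ≤ F^o(x−x₀) ≤ δ}, equals i on {F^o(x−x₀) = ρ}, equals s on {F^o(x−x₀) = δ}, and (assuming F(∇F^o) = 1 and the co-area identity ∫_{{F^o=r}}|∇F^o|^{−1}dσ = Nκ_N r^{N−1}) satisfies ∫_{{ρ ≤ F^o(x−x₀) ≤ δ}} F^N(∇h) dx = N κ_N (i−s)^N/(log δ − log ρ)^{N−1}. -/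
open MeasureTheory Real

/-- the explicit capacitor on the Wulff annulus. The function
`h(x) = (s(log F^o(x−x₀) − log ρ) + i(log δ − log F^o(x−x₀)))/(log δ − log ρ)`
equals `i` on the inner Wulff sphere, `s` on the outer one, and (given `F(∇F^o)=1`
and the co-area identity) has energy `N κ (i−s)^N/(log δ − log ρ)^{N−1}`. -/
theorem stmt_13 (N : ℕ) (hN : 2 ≤ N) (κ ρ δ i s : ℝ)
    (hκ : 0 < κ) (hρ : 0 < ρ) (hρδ : ρ < δ) (hsi : s ≤ i)
    (F Fo : EuclideanSpace ℝ (Fin N) → ℝ) (x₀ : EuclideanSpace ℝ (Fin N))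
    (hFhom : ∀ (c : ℝ) (x : EuclideanSpace ℝ (Fin N)), F (c • x) = |c| * F x)
    (hFo0 : Fo 0 = 0)
    (hFopos : ∀ x, x ≠ 0 → 0 < Fo x)
    (hFodiff : ∀ x, x ≠ 0 → DifferentiableAt ℝ Fo x)
    (hFgrad : ∀ x, x ≠ 0 → F (gradient Fo x) = 1)
    (hcoarea : ∀ g : ℝ → ℝ, Measurable g →
      ∫ x in {x : EuclideanSpace ℝ (Fin N) | ρ ≤ Fo (x - x₀) ∧ Fo (x - x₀) ≤ δ}, g (Fo (x - x₀))
        = ∫ r in ρ..δ, g r * ((N : ℝ) * κ * r ^ (N - 1)))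
    (h : EuclideanSpace ℝ (Fin N) → ℝ)
    (hh : ∀ x, h x = (s * (Real.log (Fo (x - x₀)) - Real.log ρ)
        + i * (Real.log δ - Real.log (Fo (x - x₀)))) / (Real.log δ - Real.log ρ)) :
    (∀ x, Fo (x - x₀) = ρ → h x = i) ∧
    (∀ x, Fo (x - x₀) = δ → h x = s) ∧
    ∫ x in {x : EuclideanSpace ℝ (Fin N) | ρ ≤ Fo (x - x₀) ∧ Fo (x - x₀) ≤ δ},
        (F (gradient h x)) ^ N
      = (N : ℝ) * κ * (i - s) ^ N / (Real.log δ - Real.log ρ) ^ (N - 1) := by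
  have hδ : (0:ℝ) < δ := hρ.trans hρδ
  have hlog : Real.log ρ < Real.log δ := Real.log_lt_log hρ hρδ
  set L : ℝ := Real.log δ - Real.log ρ with hLdef
  have hL : 0 < L := sub_pos.mpr hlog
  have hLne : L ≠ 0 := ne_of_gt hL
  refine ⟨?_, ?_, ?_⟩
  · intro x hx
    rw [hh x, hx]
    field_simp
    rw [hLdef]; ring
  · intro x hx
    rw [hh x, hx]
    field_simp
    rw [hLdef]; ring
  · -- energy computation
    set S : Set (EuclideanSpace ℝ (Fin N)) :=
      {x : EuclideanSpace ℝ (Fin N) | ρ ≤ Fo (x - x₀) ∧ Fo (x - x₀) ≤ δ} with hSdef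
    have hFoMeas : Measurable Fo := by
      apply measurable_of_continuousOn_compl_singleton 0
      intro y hy
      exact ((hFodiff y hy).continuousAt).continuousWithinAt
    have hSmeas : MeasurableSet S := by
      have : S = (fun x => Fo (x - x₀)) ⁻¹' (Set.Icc ρ δ) := by
        ext x; simp [hSdef, Set.mem_Icc]
      rw [this]
      exact (hFoMeas.comp (measurable_id.sub_const x₀)) measurableSet_Icc
    -- gradient of h on S
    have hgrad : ∀ x ∈ S, gradient h x
        = ((s - i) / (L * Fo (x - x₀))) • gradient Fo (x - x₀) := by
      intro x hx
      have hu : x - x₀ ≠ 0 := by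
        intro h0
        have h1 : ρ ≤ Fo (x - x₀) := hx.1
        rw [h0, hFo0] at h1
        linarith
      set u := x - x₀ with hu'
      have ht0 : 0 < Fo u := hFopos u hu
      -- the scalar function
      have hφ : HasDerivAt (fun t : ℝ =>
          (s * (Real.log t - Real.log ρ) + i * (Real.log δ - Real.log t)) / L)
          ((s - i) / (L * Fo u)) (Fo u) := by
        have hlog' : HasDerivAt Real.log (Fo u)⁻¹ (Fo u) := Real.hasDerivAt_log (ne_of_gt ht0)
        have h1 : HasDerivAt (fun t : ℝ =>
            (s * (Real.log t - Real.log ρ) + i * (Real.log δ - Real.log t)) / L)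
            ((s * (Fo u)⁻¹ + i * (0 - (Fo u)⁻¹)) / L) (Fo u) := by
          exact (((hlog'.sub_const (Real.log ρ)).const_mul s).add
            (((hasDerivAt_const (Fo u) (Real.log δ)).sub hlog').const_mul i)).div_const L
        convert h1 using 1
        field_simp
        ring
      -- Fo (· - x₀) fderiv
      have hFoF : HasFDerivAt Fo
          ((InnerProductSpace.toDual ℝ _) (gradient Fo u)) u :=
        (hFodiff u hu).hasGradientAt.hasFDerivAt
      have hsub : HasFDerivAt (fun y : EuclideanSpace ℝ (Fin N) => y - x₀)
          (ContinuousLinearMap.id ℝ _) x := (hasFDerivAt_id x).sub_const x₀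
      have hcomp : HasFDerivAt (fun y => Fo (y - x₀))
          ((InnerProductSpace.toDual ℝ _) (gradient Fo u)) x := by
        have := hFoF.comp x hsub
        rwa [ContinuousLinearMap.comp_id] at this
      have hhF : HasFDerivAt h
          (((s - i) / (L * Fo u)) • ((InnerProductSpace.toDual ℝ _) (gradient Fo u))) x := by
        have := hφ.comp_hasFDerivAt x hcomp
        apply this.congr_of_eventuallyEq
        filter_upwards with y
        simp [Function.comp, hh y]
      have : HasGradientAt h (((s - i) / (L * Fo u)) • gradient Fo u) x := by
        rw [hasGradientAt_iff_hasFDerivAt, _root_.map_smul]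
        exact hhF
      exact this.gradient
    -- the energy integrand
    have hInt : ∀ x ∈ S, (F (gradient h x)) ^ N = ((i - s) / L / Fo (x - x₀)) ^ N := by
      intro x hx
      have hu : x - x₀ ≠ 0 := by
        intro h0
        have h1 : ρ ≤ Fo (x - x₀) := hx.1
        rw [h0, hFo0] at h1
        linarith
      have ht0 : 0 < Fo (x - x₀) := hFopos _ hu
      rw [hgrad x hx, hFhom, hFgrad _ hu, mul_one]
      congr 1
      rw [abs_div, abs_of_nonneg (by positivity : (0:ℝ) ≤ L * Fo (x - x₀))]
      rw [abs_sub_comm, abs_of_nonneg (sub_nonneg.mpr hsi)]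
      field_simp
    have hgmeas : Measurable (fun r : ℝ => ((i - s) / L / r) ^ N) :=
      ((measurable_const.div measurable_id)).pow_const N
    calc ∫ x in S, (F (gradient h x)) ^ N
        = ∫ x in S, ((i - s) / L / Fo (x - x₀)) ^ N :=
          setIntegral_congr_fun hSmeas (fun x hx => hInt x hx)
      _ = ∫ r in ρ..δ, ((i - s) / L / r) ^ N * ((N : ℝ) * κ * r ^ (N - 1)) :=
          hcoarea _ hgmeas
      _ = ∫ r in ρ..δ, (((i - s) / L) ^ N * ((N : ℝ) * κ)) * r⁻¹ := by
          apply intervalIntegral.integral_congr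
          intro r hr
          rw [Set.uIcc_of_le (le_of_lt hρδ)] at hr
          have hr0 : 0 < r := lt_of_lt_of_le hρ hr.1
          have hpow : r ^ N = r ^ (N - 1) * r := by
            rw [← pow_succ]; congr 1; omega
          have hrne : r ^ (N - 1) ≠ 0 := pow_ne_zero _ hr0.ne'
          have h2 : ((i - s) / L / r) ^ N = ((i - s) / L) ^ N * (r ^ N)⁻¹ := by
            rw [div_pow ((i-s)/L) r, div_eq_mul_inv]
          show ((i - s) / L / r) ^ N * ((N : ℝ) * κ * r ^ (N - 1))
            = ((i - s) / L) ^ N * ((N : ℝ) * κ) * r⁻¹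
          rw [h2, hpow, mul_inv]
          field_simp
      _ = (((i - s) / L) ^ N * ((N : ℝ) * κ)) * L := by
          rw [intervalIntegral.integral_const_mul, integral_inv_of_pos hρ hδ,
            Real.log_div (ne_of_gt hδ) (ne_of_gt hρ)]
      _ = (N : ℝ) * κ * (i - s) ^ N / L ^ (N - 1) := by
          have hpow : L ^ N = L ^ (N - 1) * L := by
            rw [← pow_succ]; congr 1; omega
          have hLne' : L ^ (N - 1) ≠ 0 := pow_ne_zero _ hLne
          rw [div_pow, hpow]
          field_simp
end
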